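/- Let G be an abelian group. The set of quasi-endomorphisms of G modulo the equivalence ≡ forms an associative unital ring, where addition is induced by the sum R + S of additive relations, multiplication is induced by composition of additive relations, the zero element is the class of 0_G = G × {0}, and the multiplicative identity is the class of id_G = {(g,g) : g ∈ G}. -/

import Mathlib

/-!
The equivalence `R ≡ R'` splits into the two one-sided comparisons `AlmostLE R R'` and
`AlmostLE R' R`: on a subgroup of finite index, each value of one relation lies within a fixed
finite subgroup of a value of the other. Addition, negation and composition are monotone for
`AlmostLE`; for composition this is because two values of a quasi-endomorphism at the same point
differ by an element of its finite cokernel, which the next factor maps into a finite set.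
For the same reason an inclusion `R ≤ R'` of quasi-endomorphisms is already an equivalence. So
every ring axiom reduces to an identity or an inclusion of relations: associativity,
commutativity and the unit laws hold exactly, distributivity and `0 * R = 0 = R * 0` as
inclusions.
-/

namespace QH

variable {G H K : Type*} [AddCommGroup G] [AddCommGroup H] [AddCommGroup K]

def dom (R : AddSubgroup (G × H)) : AddSubgroup G := R.map (AddMonoidHom.fst G H)

def img (R : AddSubgroup (G × H)) : AddSubgroup H := R.map (AddMonoidHom.snd G H)

def ker (R : AddSubgroup (G × H)) : AddSubgroup G := R.comap (AddMonoidHom.inl G H)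

def coker (R : AddSubgroup (G × H)) : AddSubgroup H := R.comap (AddMonoidHom.inr G H)

/-- The sum of two additive relations: `R + R' = {(a, b+b') : (a,b) ∈ R, (a,b') ∈ R'}`. -/
def relAdd (R R' : AddSubgroup (G × H)) : AddSubgroup (G × H) where
  carrier := {p | ∃ b b', (p.1, b) ∈ R ∧ (p.1, b') ∈ R' ∧ p.2 = b + b'}
  zero_mem' := ⟨0, 0, R.zero_mem, R'.zero_mem, by simp⟩
  add_mem' := by
    rintro ⟨a, c⟩ ⟨a', c'⟩ ⟨b, b', hb, hb', rfl⟩ ⟨d, d', hd, hd', rfl⟩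
    exact ⟨b + d, b' + d', R.add_mem hb hd, R'.add_mem hb' hd', by simp only [Prod.snd_add]; abel⟩
  neg_mem' := by
    rintro ⟨a, c⟩ ⟨b, b', hb, hb', rfl⟩
    exact ⟨-b, -b', R.neg_mem hb, R'.neg_mem hb', by simp only [Prod.snd_neg]; abel⟩

/-- The composition of additive relations. -/
def relComp (S : AddSubgroup (H × K)) (R : AddSubgroup (G × H)) : AddSubgroup (G × K) where
  carrier := {p | ∃ b, (p.1, b) ∈ R ∧ (b, p.2) ∈ S}
  zero_mem' := ⟨0, R.zero_mem, S.zero_mem⟩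
  add_mem' := by
    rintro ⟨a, c⟩ ⟨a', c'⟩ ⟨b, hb, hb'⟩ ⟨d, hd, hd'⟩
    exact ⟨b + d, R.add_mem hb hd, S.add_mem hb' hd'⟩
  neg_mem' := by
    rintro ⟨a, c⟩ ⟨b, hb, hb'⟩
    exact ⟨-b, R.neg_mem hb, S.neg_mem hb'⟩

/-- The inverse of an additive relation: `R⁻¹ = {(h,g) : (g,h) ∈ R}`. -/
def relInv (R : AddSubgroup (G × H)) : AddSubgroup (H × G) :=
  R.map ((AddMonoidHom.snd G H).prod (AddMonoidHom.fst G H))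

/-- The diagonal relation `id_D = {(d,d) : d ∈ D}` of a subgroup `D ≤ A`. -/
def relId {A : Type*} [AddCommGroup A] (D : AddSubgroup A) : AddSubgroup (A × A) :=
  D.map ((AddMonoidHom.id A).prod (AddMonoidHom.id A))


def IsQuasiHom (R : AddSubgroup (G × H)) : Prop :=
  (dom R).FiniteIndex ∧ ((coker R : Set H)).Finite

/-- Two additive relations `R, R' ≤ G × H` are equivalent if there are a finite-index
subgroup `G₁ ≤ G` and a finite subgroup `F ≤ H` with
`(R ∩ (G₁ × H)) + (G₁ × F) = (R' ∩ (G₁ × H)) + (G₁ × F)`. -/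
def relEquiv (R R' : AddSubgroup (G × H)) : Prop :=
  ∃ (G₁ : AddSubgroup G) (F : AddSubgroup H), G₁.FiniteIndex ∧ ((F : Set H)).Finite ∧
    relAdd (R ⊓ G₁.prod ⊤) (G₁.prod F) = relAdd (R' ⊓ G₁.prod ⊤) (G₁.prod F)

/-- The zero relation `0_G = G × {0}`. -/
def relZero (G : Type*) [AddCommGroup G] : AddSubgroup (G × G) :=
  (⊤ : AddSubgroup G).prod ⊥

/-- Quasi-endomorphisms of `G`. -/
def QEndo (G : Type*) [AddCommGroup G] := {R : AddSubgroup (G × G) // IsQuasiHom R}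

section Relations

lemma mem_dom {R : AddSubgroup (G × H)} {a : G} : a ∈ dom R ↔ ∃ b, (a, b) ∈ R := by
  simp [dom]

lemma mem_coker {R : AddSubgroup (G × H)} {b : H} : b ∈ coker R ↔ ((0 : G), b) ∈ R :=
  Iff.rfl

lemma sub_mem_coker {R : AddSubgroup (G × H)} {a : G} {b b' : H} (h : (a, b) ∈ R)
    (h' : (a, b') ∈ R) : b - b' ∈ coker R := by
  simpa [mem_coker] using R.sub_mem h h'

lemma mem_relId_top {a b : G} : (a, b) ∈ relId (⊤ : AddSubgroup G) ↔ b = a := by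
  simp [relId, eq_comm]

lemma mem_relZero {a b : G} : (a, b) ∈ relZero G ↔ b = 0 := by
  simp [relZero, AddSubgroup.mem_prod]

def relNeg (R : AddSubgroup (G × H)) : AddSubgroup (G × H) :=
  R.comap ((AddMonoidHom.id G).prodMap (-AddMonoidHom.id H))

lemma mem_relNeg {R : AddSubgroup (G × H)} {a : G} {b : H} : (a, b) ∈ relNeg R ↔ (a, -b) ∈ R :=
  Iff.rfl

def relPreimage (R : AddSubgroup (G × H)) (V : AddSubgroup H) : AddSubgroup G :=
  dom (R ⊓ (⊤ : AddSubgroup G).prod V)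

lemma mem_relPreimage {R : AddSubgroup (G × H)} {V : AddSubgroup H} {a : G} :
    a ∈ relPreimage R V ↔ ∃ b ∈ V, (a, b) ∈ R := by
  simp [relPreimage, mem_dom, AddSubgroup.mem_prod, and_comm]

def relImage (S : AddSubgroup (H × K)) (E : AddSubgroup H) : AddSubgroup K :=
  img (S ⊓ E.prod ⊤)

lemma sub_mem_relImage {S : AddSubgroup (H × K)} {E : AddSubgroup H} {b b' : H} {c c' : K}
    (h : (b, c) ∈ S) (h' : (b', c') ∈ S) (hb : b - b' ∈ E) : c - c' ∈ relImage S E :=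
  ⟨(b - b', c - c'), ⟨S.sub_mem h h', hb, trivial⟩, rfl⟩

end Relations

section Finiteness

lemma finite_sup {F₁ F₂ : AddSubgroup H} (h₁ : (F₁ : Set H).Finite) (h₂ : (F₂ : Set H).Finite) :
    ((F₁ ⊔ F₂ : AddSubgroup H) : Set H).Finite := by
  rw [AddSubgroup.add_normal]
  exact h₁.add h₂

instance finiteIndex_comap (V : AddSubgroup H) [V.FiniteIndex] (f : G →+ H) :
    (V.comap f).FiniteIndex :=
  ⟨by
    rw [AddSubgroup.index_comap]
    exact ne_zero_of_dvd_ne_zero AddSubgroup.FiniteIndex.index_ne_zero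
      (V.relIndex_dvd_index_of_normal _)⟩

/-- `R⁻¹(V)` is the image of the preimage of `V` under the two projections of `R`; its index
is then controlled by `AddSubgroup.index_map`. -/
instance finiteIndex_relPreimage (R : AddSubgroup (G × H)) [(dom R).FiniteIndex]
    (V : AddSubgroup H) [V.FiniteIndex] : (relPreimage R V).FiniteIndex := by
  set π₁ := (AddMonoidHom.fst G H).comp R.subtype
  set π₂ := (AddMonoidHom.snd G H).comp R.subtype
  have hpre : relPreimage R V = (V.comap π₂).map π₁ := by
    ext a
    simp [mem_relPreimage, π₁, π₂]
  have hrange : π₁.range = dom R := by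
    rw [AddMonoidHom.range_comp, AddSubgroup.range_subtype]
    rfl
  have : (V.comap π₂ ⊔ π₁.ker).FiniteIndex := AddSubgroup.finiteIndex_of_le le_sup_left
  rw [hpre, AddSubgroup.finiteIndex_iff, AddSubgroup.index_map, hrange]
  exact mul_ne_zero AddSubgroup.FiniteIndex.index_ne_zero AddSubgroup.FiniteIndex.index_ne_zero

/-- The first projection of `T` has range `dom T` and kernel `{0} × coker T`. -/
lemma finite_of_finite_dom_coker {T : AddSubgroup (G × H)} (hd : (dom T : Set G).Finite)
    (hc : (coker T : Set H).Finite) : (T : Set (G × H)).Finite := by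
  set π := (AddMonoidHom.fst G H).comp T.subtype
  have : Finite π.range := by
    rw [AddMonoidHom.range_comp, AddSubgroup.range_subtype]
    exact hd.to_subtype
  have : Finite (coker T) := hc.to_subtype
  have : Finite π.ker := by
    refine Finite.of_injective (β := coker T) (fun p => ⟨p.1.1.2, ?_⟩) ?_
    · have ha : p.1.1.1 = 0 := p.2
      rw [mem_coker, ← ha]
      exact p.1.2
    · rintro ⟨⟨⟨a, b⟩, hab⟩, ha : a = 0⟩ ⟨⟨⟨a', b'⟩, hab'⟩, ha' : a' = 0⟩ h
      simp_all
  exact Set.finite_coe_iff.1 (π.finite_iff_finite_ker_range.2 ⟨‹_›, ‹_›⟩)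

lemma finite_relImage {S : AddSubgroup (H × K)} {E : AddSubgroup H} (hE : (E : Set H).Finite)
    (hS : (coker S : Set K).Finite) : (relImage S E : Set K).Finite := by
  rw [relImage, img, AddSubgroup.coe_map]
  refine (finite_of_finite_dom_coker (hE.subset ?_) (hS.subset ?_)).image _
  · rintro b ⟨p, ⟨-, hp, -⟩, rfl⟩
    exact hp
  · intro c hc
    exact hc.1

end Finiteness

section Quasi

lemma coker_relAdd_le (R S : AddSubgroup (G × H)) : coker (relAdd R S) ≤ coker R ⊔ coker S := by
  rintro c ⟨b, b', hb, hb', rfl⟩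
  exact add_mem (AddSubgroup.mem_sup_left hb) (AddSubgroup.mem_sup_right hb')

lemma IsQuasiHom.add {R S : AddSubgroup (G × H)} (hR : IsQuasiHom R) (hS : IsQuasiHom S) :
    IsQuasiHom (relAdd R S) := by
  have := hR.1
  have := hS.1
  refine ⟨AddSubgroup.finiteIndex_of_le (H := dom R ⊓ dom S) ?_,
    (finite_sup hR.2 hS.2).subset (coker_relAdd_le R S)⟩
  rintro a ⟨ha, ha'⟩
  obtain ⟨b, hb⟩ := mem_dom.1 ha
  obtain ⟨b', hb'⟩ := mem_dom.1 ha'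
  exact mem_dom.2 ⟨b + b', b, b', hb, hb', rfl⟩

lemma dom_relComp (S : AddSubgroup (H × K)) (R : AddSubgroup (G × H)) :
    dom (relComp S R) = relPreimage R (dom S) := by
  ext a
  simp only [mem_dom, mem_relPreimage]
  exact ⟨fun ⟨c, b, hb, hc⟩ => ⟨b, ⟨c, hc⟩, hb⟩, fun ⟨b, ⟨c, hc⟩, hb⟩ => ⟨c, b, hb, hc⟩⟩

lemma coker_relComp_le (S : AddSubgroup (H × K)) (R : AddSubgroup (G × H)) :
    coker (relComp S R) ≤ relImage S (coker R) :=
  fun c ⟨b, hb, hc⟩ => ⟨(b, c), ⟨hc, hb, trivial⟩, rfl⟩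

lemma IsQuasiHom.comp {S : AddSubgroup (H × K)} {R : AddSubgroup (G × H)}
    (hS : IsQuasiHom S) (hR : IsQuasiHom R) : IsQuasiHom (relComp S R) := by
  have := hS.1
  have := hR.1
  rw [IsQuasiHom, dom_relComp]
  exact ⟨inferInstance, (finite_relImage hR.2 hS.2).subset (coker_relComp_le S R)⟩

lemma dom_relNeg (R : AddSubgroup (G × H)) : dom (relNeg R) = dom R := by
  ext a
  simp only [mem_dom, mem_relNeg]
  exact ⟨fun ⟨b, hb⟩ => ⟨-b, hb⟩, fun ⟨b, hb⟩ => ⟨-b, by rwa [neg_neg]⟩⟩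

lemma coker_relNeg (R : AddSubgroup (G × H)) : coker (relNeg R) = coker R := by
  ext b
  rw [mem_coker, mem_relNeg, ← mem_coker, neg_mem_iff]

lemma IsQuasiHom.neg {R : AddSubgroup (G × H)} (hR : IsQuasiHom R) : IsQuasiHom (relNeg R) := by
  rw [IsQuasiHom, dom_relNeg, coker_relNeg]
  exact hR

lemma isQuasiHom_relZero : IsQuasiHom (relZero G) := by
  refine ⟨?_, (Set.finite_singleton 0).subset fun b hb => ?_⟩
  · rw [show dom (relZero G) = ⊤ from eq_top_iff.2 fun a _ => mem_dom.2 ⟨0, mem_relZero.2 rfl⟩]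
    infer_instance
  · exact mem_relZero.1 hb

lemma isQuasiHom_relId : IsQuasiHom (relId (⊤ : AddSubgroup G)) := by
  refine ⟨?_, (Set.finite_singleton 0).subset fun b hb => ?_⟩
  · rw [show dom (relId ⊤) = ⊤ from eq_top_iff.2 fun a _ => mem_dom.2 ⟨a, mem_relId_top.2 rfl⟩]
    infer_instance
  · exact (mem_relId_top.1 hb : b = 0)

end Quasi

def AlmostLE (R R' : AddSubgroup (G × H)) : Prop :=
  ∃ (G₁ : AddSubgroup G) (F : AddSubgroup H), G₁.FiniteIndex ∧ (F : Set H).Finite ∧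
    ∀ a ∈ G₁, ∀ b, (a, b) ∈ R → ∃ b', (a, b') ∈ R' ∧ b - b' ∈ F

namespace AlmostLE

variable {R R' R'' : AddSubgroup (G × H)}

lemma of_le (h : R ≤ R') : AlmostLE R R' :=
  ⟨⊤, ⊥, inferInstance, by simp, fun a _ b hb => ⟨b, h hb, by simp⟩⟩

lemma of_ge (h : R' ≤ R) (hd : (dom R').FiniteIndex) (hc : (coker R : Set H).Finite) :
    AlmostLE R R' := by
  refine ⟨dom R', coker R, hd, hc, fun a ha b hb => ?_⟩
  obtain ⟨b', hb'⟩ := mem_dom.1 ha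
  exact ⟨b', hb', sub_mem_coker hb (h hb')⟩

lemma trans (h₁ : AlmostLE R R') (h₂ : AlmostLE R' R'') : AlmostLE R R'' := by
  obtain ⟨G₁, F₁, _, hF₁, h₁⟩ := h₁
  obtain ⟨G₂, F₂, _, hF₂, h₂⟩ := h₂
  refine ⟨G₁ ⊓ G₂, F₁ ⊔ F₂, inferInstance, finite_sup hF₁ hF₂, fun a ha b hb => ?_⟩
  obtain ⟨b', hb', hbb'⟩ := h₁ a ha.1 b hb
  obtain ⟨b'', hb'', hb'b''⟩ := h₂ a ha.2 b' hb'
  refine ⟨b'', hb'', ?_⟩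
  rw [← sub_add_sub_cancel b b' b'']
  exact add_mem (AddSubgroup.mem_sup_left hbb') (AddSubgroup.mem_sup_right hb'b'')

lemma add {S S' : AddSubgroup (G × H)} (hR : AlmostLE R R') (hS : AlmostLE S S') :
    AlmostLE (relAdd R S) (relAdd R' S') := by
  obtain ⟨G₁, F₁, _, hF₁, hR⟩ := hR
  obtain ⟨G₂, F₂, _, hF₂, hS⟩ := hS
  refine ⟨G₁ ⊓ G₂, F₁ ⊔ F₂, inferInstance, finite_sup hF₁ hF₂, ?_⟩
  rintro a ⟨ha₁, ha₂⟩ _ ⟨b, c, hb, hc, rfl⟩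
  obtain ⟨b', hb', hbb'⟩ := hR a ha₁ b hb
  obtain ⟨c', hc', hcc'⟩ := hS a ha₂ c hc
  refine ⟨b' + c', ⟨b', c', hb', hc', rfl⟩, ?_⟩
  rw [add_sub_add_comm]
  exact add_mem (AddSubgroup.mem_sup_left hbb') (AddSubgroup.mem_sup_right hcc')

lemma neg (h : AlmostLE R R') : AlmostLE (relNeg R) (relNeg R') := by
  obtain ⟨G₁, F, hG₁, hF, h⟩ := h
  refine ⟨G₁, F, hG₁, hF, fun a ha b hb => ?_⟩
  obtain ⟨b', hb', hbb'⟩ := h a ha (-b) hb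
  refine ⟨-b', by rwa [mem_relNeg, neg_neg], ?_⟩
  simpa [add_comm] using neg_mem hbb'

/-- To compare `S ∘ R` with `S' ∘ R'` at `a`, route through a value `b₀` of `R'` at `a` lying in
`dom S`: a value `b` of `R` at `a` differs from `b₀` by an element of the finite group
`F₁ ⊔ coker R'`, so the corresponding values of `S` differ by an element of its finite image. -/
lemma comp {S S' : AddSubgroup (H × K)} (hS : IsQuasiHom S) (hR' : IsQuasiHom R')
    (hSS' : AlmostLE S S') (hRR' : AlmostLE R R') : AlmostLE (relComp S R) (relComp S' R') := by
  obtain ⟨H₁, F₂, _, hF₂, hSS'⟩ := hSS'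
  obtain ⟨G₁, F₁, _, hF₁, hRR'⟩ := hRR'
  have := hS.1
  have := hR'.1
  refine ⟨G₁ ⊓ relPreimage R' (H₁ ⊓ dom S), relImage S (F₁ ⊔ coker R') ⊔ F₂, inferInstance,
    finite_sup (finite_relImage (finite_sup hF₁ hR'.2) hS.2) hF₂, ?_⟩
  rintro a ⟨haG₁, haS⟩ c ⟨b, hab, hbc⟩
  obtain ⟨b', hab', hbb'⟩ := hRR' a haG₁ b hab
  obtain ⟨b₀, ⟨hb₀H₁, hb₀S⟩, hab₀⟩ := mem_relPreimage.1 haS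
  obtain ⟨c₀, hb₀c₀⟩ := mem_dom.1 hb₀S
  obtain ⟨c', hb₀c', hc₀c'⟩ := hSS' b₀ hb₀H₁ c₀ hb₀c₀
  have hbb₀ : b - b₀ ∈ F₁ ⊔ coker R' := by
    rw [← sub_add_sub_cancel b b' b₀]
    exact add_mem (AddSubgroup.mem_sup_left hbb')
      (AddSubgroup.mem_sup_right (sub_mem_coker hab' hab₀))
  refine ⟨c', ⟨b₀, hab₀, hb₀c'⟩, ?_⟩
  rw [← sub_add_sub_cancel c c₀ c']
  exact add_mem (AddSubgroup.mem_sup_left (sub_mem_relImage hbc hb₀c₀ hbb₀))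
    (AddSubgroup.mem_sup_right hc₀c')

end AlmostLE

section Equivalence

variable {R R' R'' : AddSubgroup (G × H)}

lemma mem_relAdd_inf_prod {G₁ : AddSubgroup G} {F : AddSubgroup H} {a : G} {c : H} :
    (a, c) ∈ relAdd (R ⊓ G₁.prod ⊤) (G₁.prod F) ↔ a ∈ G₁ ∧ ∃ b, (a, b) ∈ R ∧ c - b ∈ F := by
  constructor
  · rintro ⟨b, f, ⟨hb, ha, -⟩, ⟨-, hf⟩, rfl⟩
    exact ⟨ha, b, hb, by rwa [add_sub_cancel_left]⟩
  · rintro ⟨ha, b, hb, hf⟩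
    exact ⟨b, c - b, ⟨hb, ha, trivial⟩, ⟨ha, hf⟩, (add_sub_cancel b c).symm⟩

lemma relEquiv_iff_almostLE : relEquiv R R' ↔ AlmostLE R R' ∧ AlmostLE R' R := by
  constructor
  · rintro ⟨G₁, F, hG₁, hF, h⟩
    have key : ∀ {A B : AddSubgroup (G × H)}, relAdd (A ⊓ G₁.prod ⊤) (G₁.prod F) =
        relAdd (B ⊓ G₁.prod ⊤) (G₁.prod F) → AlmostLE A B := fun h =>
      ⟨G₁, F, hG₁, hF, fun a ha b hb =>
        (mem_relAdd_inf_prod.1 (h ▸ mem_relAdd_inf_prod.2 ⟨ha, b, hb, by simp⟩)).2⟩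
    exact ⟨key h, key h.symm⟩
  · rintro ⟨⟨G₁, F₁, _, hF₁, h₁⟩, ⟨G₂, F₂, _, hF₂, h₂⟩⟩
    have key : ∀ {A B : AddSubgroup (G × H)} {G' : AddSubgroup G} {F' : AddSubgroup H},
        G₁ ⊓ G₂ ≤ G' → F' ≤ F₁ ⊔ F₂ →
        (∀ a ∈ G', ∀ b, (a, b) ∈ A → ∃ b', (a, b') ∈ B ∧ b - b' ∈ F') →
        relAdd (A ⊓ (G₁ ⊓ G₂).prod ⊤) ((G₁ ⊓ G₂).prod (F₁ ⊔ F₂)) ≤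
          relAdd (B ⊓ (G₁ ⊓ G₂).prod ⊤) ((G₁ ⊓ G₂).prod (F₁ ⊔ F₂)) := by
      intro A B G' F' hG hF h ⟨a, c⟩ hac
      obtain ⟨ha, b, hb, hcb⟩ := mem_relAdd_inf_prod.1 hac
      obtain ⟨b', hb', hbb'⟩ := h a (hG ha) b hb
      refine mem_relAdd_inf_prod.2 ⟨ha, b', hb', ?_⟩
      rw [← sub_add_sub_cancel c b b']
      exact add_mem hcb (hF hbb')
    exact ⟨G₁ ⊓ G₂, F₁ ⊔ F₂, inferInstance, finite_sup hF₁ hF₂, le_antisymm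
      (key inf_le_left le_sup_left h₁) (key inf_le_right le_sup_right h₂)⟩

lemma relEquiv_refl (R : AddSubgroup (G × H)) : relEquiv R R :=
  ⟨⊤, ⊥, inferInstance, by simp, rfl⟩

lemma relEquiv.symm (h : relEquiv R R') : relEquiv R' R :=
  let ⟨G₁, F, hG₁, hF, h⟩ := h
  ⟨G₁, F, hG₁, hF, h.symm⟩

lemma relEquiv.trans (h : relEquiv R R') (h' : relEquiv R' R'') : relEquiv R R'' := by
  rw [relEquiv_iff_almostLE] at *
  exact ⟨h.1.trans h'.1, h'.2.trans h.2⟩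

lemma relEquiv_of_le (h : R ≤ R') (hd : (dom R).FiniteIndex) (hc : (coker R' : Set H).Finite) :
    relEquiv R R' :=
  relEquiv_iff_almostLE.2 ⟨.of_le h, .of_ge h hd hc⟩

lemma relEquiv.add {S S' : AddSubgroup (G × H)} (hR : relEquiv R R') (hS : relEquiv S S') :
    relEquiv (relAdd R S) (relAdd R' S') := by
  rw [relEquiv_iff_almostLE] at *
  exact ⟨hR.1.add hS.1, hR.2.add hS.2⟩

lemma relEquiv.neg (h : relEquiv R R') : relEquiv (relNeg R) (relNeg R') := by
  rw [relEquiv_iff_almostLE] at *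
  exact ⟨h.1.neg, h.2.neg⟩

lemma relEquiv.comp {S S' : AddSubgroup (H × K)} (hS : IsQuasiHom S) (hS' : IsQuasiHom S')
    (hR : IsQuasiHom R) (hR' : IsQuasiHom R') (hSS' : relEquiv S S') (hRR' : relEquiv R R') :
    relEquiv (relComp S R) (relComp S' R') := by
  rw [relEquiv_iff_almostLE] at *
  exact ⟨hSS'.1.comp hS hR' hRR'.1, hSS'.2.comp hS' hR hRR'.2⟩

end Equivalence

section Laws

variable {L : Type*} [AddCommGroup L]

lemma relAdd_comm (R S : AddSubgroup (G × H)) : relAdd R S = relAdd S R := by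
  ext ⟨a, c⟩
  constructor <;>
  · rintro ⟨b, b', hb, hb', rfl⟩
    exact ⟨b', b, hb', hb, add_comm b b'⟩

lemma relAdd_assoc (R S T : AddSubgroup (G × H)) :
    relAdd (relAdd R S) T = relAdd R (relAdd S T) := by
  ext ⟨a, c⟩
  constructor
  · rintro ⟨_, b₃, ⟨b₁, b₂, h₁, h₂, rfl⟩, h₃, rfl⟩
    exact ⟨b₁, b₂ + b₃, h₁, ⟨b₂, b₃, h₂, h₃, rfl⟩, add_assoc b₁ b₂ b₃⟩
  · rintro ⟨b₁, _, h₁, ⟨b₂, b₃, h₂, h₃, rfl⟩, rfl⟩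
    exact ⟨b₁ + b₂, b₃, ⟨b₁, b₂, h₁, h₂, rfl⟩, h₃, (add_assoc b₁ b₂ b₃).symm⟩

lemma relZero_relAdd (R : AddSubgroup (G × G)) : relAdd (relZero G) R = R := by
  ext ⟨a, c⟩
  constructor
  · rintro ⟨b, b', hb, hb', rfl⟩
    rwa [mem_relZero.1 hb, zero_add]
  · exact fun h => ⟨0, c, mem_relZero.2 rfl, h, (zero_add c).symm⟩

lemma relComp_assoc (T : AddSubgroup (K × L)) (S : AddSubgroup (H × K))
    (R : AddSubgroup (G × H)) : relComp T (relComp S R) = relComp (relComp T S) R := by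
  ext ⟨a, d⟩
  exact ⟨fun ⟨c, ⟨b, hb, hc⟩, hd⟩ => ⟨b, hb, c, hc, hd⟩,
    fun ⟨b, hb, c, hc, hd⟩ => ⟨c, ⟨b, hb, hc⟩, hd⟩⟩

lemma relId_relComp (R : AddSubgroup (G × H)) : relComp (relId ⊤) R = R := by
  ext ⟨a, c⟩
  constructor
  · rintro ⟨b, hb, hbc⟩
    obtain rfl : c = b := mem_relId_top.1 hbc
    exact hb
  · exact fun h => ⟨c, h, mem_relId_top.2 rfl⟩

lemma relComp_relId (R : AddSubgroup (G × H)) : relComp R (relId ⊤) = R := by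
  ext ⟨a, c⟩
  constructor
  · rintro ⟨b, hab, hb⟩
    rwa [mem_relId_top.1 hab] at hb
  · exact fun h => ⟨a, mem_relId_top.2 rfl, h⟩

lemma relZero_relComp_le_relZero (R : AddSubgroup (G × G)) : relComp (relZero G) R ≤ relZero G :=
  fun _ ⟨_, _, hc⟩ => hc

lemma relZero_le_relComp_relZero (R : AddSubgroup (G × G)) : relZero G ≤ relComp R (relZero G) :=
  fun ⟨a, c⟩ hc => ⟨0, mem_relZero.2 rfl, by rw [mem_relZero.1 hc]; exact R.zero_mem⟩

lemma relZero_relComp_le_relNeg_relAdd_self (R : AddSubgroup (G × G)) :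
    relComp (relZero G) R ≤ relAdd (relNeg R) R := by
  rintro ⟨a, c⟩ ⟨b, hb, hc⟩
  exact ⟨-b, b, by rwa [mem_relNeg, neg_neg], hb, by rw [mem_relZero.1 hc, neg_add_cancel]⟩

lemma relAdd_relComp_le_relComp_relAdd (S : AddSubgroup (H × K)) (R T : AddSubgroup (G × H)) :
    relAdd (relComp S R) (relComp S T) ≤ relComp S (relAdd R T) := by
  rintro ⟨a, c⟩ ⟨c₁, c₂, ⟨b₁, h₁, h₁'⟩, ⟨b₂, h₂, h₂'⟩, rfl⟩
  exact ⟨b₁ + b₂, ⟨b₁, b₂, h₁, h₂, rfl⟩, S.add_mem h₁' h₂'⟩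

lemma relComp_relAdd_le_relAdd_relComp (S T : AddSubgroup (H × K)) (R : AddSubgroup (G × H)) :
    relComp (relAdd S T) R ≤ relAdd (relComp S R) (relComp T R) := by
  rintro ⟨a, c⟩ ⟨b, hb, c₁, c₂, h₁, h₂, rfl⟩
  exact ⟨c₁, c₂, ⟨b, hb, h₁⟩, ⟨b, hb, h₂⟩, rfl⟩

end Laws

namespace QEndo

instance : Add (QEndo G) := ⟨fun R S => ⟨relAdd R.1 S.1, R.2.add S.2⟩⟩

instance : Mul (QEndo G) := ⟨fun S R => ⟨relComp S.1 R.1, S.2.comp R.2⟩⟩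

instance : Neg (QEndo G) := ⟨fun R => ⟨relNeg R.1, R.2.neg⟩⟩

instance : Zero (QEndo G) := ⟨⟨relZero G, isQuasiHom_relZero⟩⟩

instance : One (QEndo G) := ⟨⟨relId ⊤, isQuasiHom_relId⟩⟩

variable (G) in
instance setoid : Setoid (QEndo G) where
  r R S := relEquiv R.1 S.1
  iseqv := ⟨fun R => relEquiv_refl R.1, relEquiv.symm, relEquiv.trans⟩

lemma mk_eq_mk_of_eq {R S : QEndo G} (h : R.1 = S.1) :
    (⟦R⟧ : Quotient (setoid G)) = ⟦S⟧ :=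
  congrArg _ (Subtype.ext h)

lemma mk_eq_mk_of_le {R S : QEndo G} (h : R.1 ≤ S.1) : (⟦R⟧ : Quotient (setoid G)) = ⟦S⟧ :=
  Quotient.sound (relEquiv_of_le h R.2.1 S.2.2)

instance : Add (Quotient (setoid G)) :=
  ⟨Quotient.map₂ (· + ·) fun _ _ hR _ _ hS => relEquiv.add hR hS⟩

instance : Mul (Quotient (setoid G)) :=
  ⟨Quotient.map₂ (· * ·) fun S S' hS R R' hR => relEquiv.comp S.2 S'.2 R.2 R'.2 hS hR⟩

instance : Neg (Quotient (setoid G)) := ⟨Quotient.map (-·) fun _ _ h => relEquiv.neg h⟩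

instance : Zero (Quotient (setoid G)) := ⟨⟦0⟧⟩

instance : One (Quotient (setoid G)) := ⟨⟦1⟧⟩

variable (G) in
instance ring : Ring (Quotient (setoid G)) where
  nsmul := nsmulRec
  zsmul := zsmulRec
  add_assoc := by
    rintro ⟨R⟩ ⟨S⟩ ⟨T⟩
    exact mk_eq_mk_of_eq (relAdd_assoc R.1 S.1 T.1)
  zero_add := by
    rintro ⟨R⟩
    exact mk_eq_mk_of_eq (relZero_relAdd R.1)
  add_zero := by
    rintro ⟨R⟩
    exact mk_eq_mk_of_eq ((relAdd_comm R.1 _).trans (relZero_relAdd R.1))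
  add_comm := by
    rintro ⟨R⟩ ⟨S⟩
    exact mk_eq_mk_of_eq (relAdd_comm R.1 S.1)
  neg_add_cancel := by
    rintro ⟨R⟩
    -- both `-R + R` and `0` contain `0 * R = dom R × {0}`
    have h₀ : (⟦0 * R⟧ : Quotient (setoid G)) = ⟦0⟧ :=
      mk_eq_mk_of_le (relZero_relComp_le_relZero R.1)
    exact (mk_eq_mk_of_le (R := 0 * R) (S := -R + R)
      (relZero_relComp_le_relNeg_relAdd_self R.1)).symm.trans h₀
  mul_assoc := by
    rintro ⟨R⟩ ⟨S⟩ ⟨T⟩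
    exact mk_eq_mk_of_eq (relComp_assoc R.1 S.1 T.1).symm
  one_mul := by
    rintro ⟨R⟩
    exact mk_eq_mk_of_eq (relId_relComp R.1)
  mul_one := by
    rintro ⟨R⟩
    exact mk_eq_mk_of_eq (relComp_relId R.1)
  left_distrib := by
    rintro ⟨S⟩ ⟨R⟩ ⟨T⟩
    exact (mk_eq_mk_of_le (relAdd_relComp_le_relComp_relAdd S.1 R.1 T.1)).symm
  right_distrib := by
    rintro ⟨S⟩ ⟨T⟩ ⟨R⟩
    exact mk_eq_mk_of_le (relComp_relAdd_le_relAdd_relComp S.1 T.1 R.1)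
  zero_mul := by
    rintro ⟨R⟩
    exact mk_eq_mk_of_le (R := 0 * R) (S := 0) (relZero_relComp_le_relZero R.1)
  mul_zero := by
    rintro ⟨R⟩
    exact (mk_eq_mk_of_le (R := 0) (S := R * 0) (relZero_le_relComp_relZero R.1)).symm

end QEndo

/-- the quasi-endomorphisms of `G` modulo the equivalence `relEquiv` form an
associative unital ring, with addition induced by `relAdd`, multiplication induced by
composition `relComp`, zero the class of `G × {0}` and one the class of the diagonal. -/
theorem qEndo_ring (G : Type*) [AddCommGroup G] :
    ∃ (s : Setoid (QEndo G)) (ringStr : Ring (Quotient s)),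
      (∀ R S : QEndo G, s.r R S ↔ relEquiv R.1 S.1) ∧
      (∀ R S T : QEndo G, relEquiv T.1 (relAdd R.1 S.1) →
        ringStr.add (Quotient.mk s R) (Quotient.mk s S) = Quotient.mk s T) ∧
      (∀ R S T : QEndo G, relEquiv T.1 (relComp S.1 R.1) →
        ringStr.mul (Quotient.mk s S) (Quotient.mk s R) = Quotient.mk s T) ∧
      (∀ Z : QEndo G, relEquiv Z.1 (relZero G) →
        ringStr.zero = Quotient.mk s Z) ∧
      (∀ I : QEndo G, relEquiv I.1 (relId (⊤ : AddSubgroup G)) →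
        ringStr.one = Quotient.mk s I) :=
  ⟨QEndo.setoid G, QEndo.ring G, fun _ _ => Iff.rfl,
    fun _ _ _ h => Quotient.sound h.symm, fun _ _ _ h => Quotient.sound h.symm,
    fun _ h => Quotient.sound h.symm, fun _ h => Quotient.sound h.symm⟩

end QH
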